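/- Let X be a stationary mean-zero process with autocovariance γ(τ) satisfying γ(τ) ~ C τ^{2H-2} as τ → ∞ with 1/2 < H < 1 and C = H(2H-1)γ(0)... (persistent case, γ(0) = 1). Then the DFA-m fluctuation function satisfies E F^2(s)/s^{2H} → λ_{m,H} := 2H(2H-1) Σ_{q=0}^{2m+3} d_q/(q+2H-1) as s → ∞. -/

import Mathlib

open MeasureTheory Finset Filter Matrix

noncomputable def dfaD (s : ℕ) : Matrix (Fin s) (Fin s) ℝ :=
  fun i j => if (j : ℕ) ≤ (i : ℕ) then 1 else 0

noncomputable def dfaB (m s : ℕ) : Matrix (Fin (m+1)) (Fin s) ℝ :=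
  fun k t => (((t : ℕ) + 1 : ℕ) : ℝ) ^ (k : ℕ)

noncomputable def dfaQ (m s : ℕ) : Matrix (Fin s) (Fin s) ℝ :=
  (dfaB m s)ᵀ * (dfaB m s * (dfaB m s)ᵀ)⁻¹ * dfaB m s

noncomputable def dfaA (m s : ℕ) : Matrix (Fin s) (Fin s) ℝ :=
  (dfaD s)ᵀ * (1 - dfaQ m s) * dfaD s

noncomputable def dfaG (m s j : ℕ) : ℝ :=
  ∑ k : Fin s, ∑ l : Fin s, if (l : ℕ) = (k : ℕ) + j then dfaA m s k l else 0

/-!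
Stationarity turns `E F²(s)` into `(1/s) Σ_{k,l} A_{kl} γ(|k - l|)`, and since the DFA matrix `A`
is symmetric this folds into `(1/s) (γ(0) G(0,s) + 2 Σ_{j=1}^{s-1} γ(j) G(j,s))`. The diagonal
term is `O(s²) = o(s^{2H+1})`. Replacing `G(j,s)` by `Σ_q d_q s^{2-q} j^q` costs
`o(s²) · Σ_{j<s} |γ(j)| = o(s^{2H+1})`. Finally `Σ_{j<s} γ(j) j^q ~ H(2H-1) s^{q+2H-1}/(q+2H-1)`,
a Stolz–Cesàro comparison with the telescoping sums of `(j+1)^{b+1} - j^{b+1} ~ (b+1) j^b`.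
-/

open Asymptotics Topology

theorem tendsto_div_of_tendsto_div_const_mul {α : Type*} {l : Filter α} {u w : α → ℝ} {C : ℝ}
    (hC : C ≠ 0) (h : Tendsto (fun x => u x / (C * w x)) l (𝓝 1)) :
    Tendsto (fun x => u x / w x) l (𝓝 C) := by
  have h' := h.const_mul C
  rw [mul_one] at h'
  refine h'.congr fun x => ?_
  rw [← mul_div_assoc, mul_div_mul_left _ _ hC]

theorem isBigO_of_tendsto_div_const_mul {α : Type*} {l : Filter α} {u w : α → ℝ} {C : ℝ}
    (h : Tendsto (fun x => u x / (C * w x)) l (𝓝 1)) : u =O[l] w :=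
  (isEquivalent_of_tendsto_one h).isBigO.trans (isBigO_const_mul_self C w l)

theorem tendsto_rpow_add_one_sub_rpow_div_rpow (b : ℝ) :
    Tendsto (fun j : ℕ => (((j : ℝ) + 1) ^ (b + 1) - (j : ℝ) ^ (b + 1)) / (j : ℝ) ^ b)
      atTop (𝓝 (b + 1)) := by
  have hderiv : HasDerivAt (fun x : ℝ => (1 + x) ^ (b + 1)) (b + 1) 0 := by
    simpa using ((Real.hasDerivAt_rpow_const (x := 1 + 0) (p := b + 1)
      (Or.inl (by norm_num))).comp_const_add (1 : ℝ) (0 : ℝ))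
  have hinv : Tendsto (fun j : ℕ => (j : ℝ)⁻¹) atTop (𝓝[≠] 0) :=
    (tendsto_nhdsWithin_mono_right (fun _ hx => ne_of_gt hx) tendsto_inv_atTop_nhdsGT_zero).comp
      tendsto_natCast_atTop_atTop
  refine (hderiv.tendsto_slope_zero.comp hinv).congr' ?_
  filter_upwards [eventually_ge_atTop 1] with j hj
  have hj : (0 : ℝ) < j := by exact_mod_cast hj
  have hsucc : (j : ℝ) + 1 = j * (1 + (j : ℝ)⁻¹) := by field_simp
  simp only [Function.comp_apply, zero_add, add_zero, Real.one_rpow, smul_eq_mul, inv_inv]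
  rw [hsucc, Real.mul_rpow hj.le (by positivity), Real.rpow_add_one hj.ne']
  field_simp

theorem tendsto_sum_Ico_div_rpow {b c : ℝ} (hb : -1 < b) {g : ℕ → ℝ}
    (hg : Tendsto (fun j : ℕ => g j / (j : ℝ) ^ b) atTop (𝓝 c)) :
    Tendsto (fun s : ℕ => (∑ j ∈ Ico 1 s, g j) / (s : ℝ) ^ (b + 1)) atTop
      (𝓝 (c / (b + 1))) := by
  have hb1 : 0 < b + 1 := by linarith
  -- `Δ j ~ (b + 1) j ^ b`, and the sums of `Δ` telescope
  set Δ : ℕ → ℝ := fun j => ((j : ℝ) + 1) ^ (b + 1) - (j : ℝ) ^ (b + 1)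
  have hΔ_pos (j : ℕ) : 0 < Δ j :=
    sub_pos.2 (Real.rpow_lt_rpow (Nat.cast_nonneg j) (lt_add_one _) hb1)
  have hΔ_sum (s : ℕ) : ∑ j ∈ range s, Δ j = (s : ℝ) ^ (b + 1) := by
    simpa [Δ, Real.zero_rpow hb1.ne'] using
      sum_range_sub (fun j : ℕ => (j : ℝ) ^ (b + 1)) s
  have hpow : Tendsto (fun s : ℕ => (s : ℝ) ^ (b + 1)) atTop atTop :=
    (tendsto_rpow_atTop hb1).comp tendsto_natCast_atTop_atTop
  have hgΔ : Tendsto (fun j => g j / Δ j) atTop (𝓝 (c / (b + 1))) := by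
    refine (hg.div (tendsto_rpow_add_one_sub_rpow_div_rpow b) hb1.ne').congr' ?_
    filter_upwards [eventually_ge_atTop 1] with j hj
    have : (j : ℝ) ^ b ≠ 0 := (Real.rpow_pos_of_pos (by exact_mod_cast hj) b).ne'
    simp only [Pi.div_apply, Δ]
    rw [div_div_div_cancel_right₀ this]
  have hlo : (fun j => g j - c / (b + 1) * Δ j) =o[atTop] Δ := by
    rw [isLittleO_iff_tendsto']
    · refine (tendsto_sub_nhds_zero_iff.2 hgΔ).congr' ?_
      filter_upwards with j
      rw [sub_div, mul_div_cancel_right₀ _ (hΔ_pos j).ne']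
    · exact Eventually.of_forall fun j hj => absurd hj (hΔ_pos j).ne'
  have hsum : (fun s => ∑ j ∈ Ico 1 s, g j - c / (b + 1) * (s : ℝ) ^ (b + 1))
      =o[atTop] fun s : ℕ => (s : ℝ) ^ (b + 1) := by
    have h := hlo.sum_range (fun j => (hΔ_pos j).le) (by simpa only [hΔ_sum] using hpow)
    simp only [hΔ_sum, sum_sub_distrib, ← mul_sum] at h
    have h0 : (fun _ : ℕ => g 0) =o[atTop] fun s : ℕ => (s : ℝ) ^ (b + 1) :=
      isLittleO_const_left.2 (Or.inr (tendsto_norm_atTop_atTop.comp hpow))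
    refine (h.sub h0).congr' ?_ EventuallyEq.rfl
    filter_upwards [eventually_ge_atTop 1] with s hs
    rw [sum_range_eq_add_Ico _ hs]
    ring
  refine tendsto_sub_nhds_zero_iff.1 (hsum.tendsto_div_nhds_zero.congr' ?_)
  filter_upwards [eventually_ge_atTop 1] with s hs
  have : (s : ℝ) ^ (b + 1) ≠ 0 := (Real.rpow_pos_of_pos (by exact_mod_cast hs) _).ne'
  field_simp

theorem tendsto_sum_Ico_mul_rpow_div_rpow {a c q : ℝ} (haq : -1 < a + q) {γ : ℕ → ℝ}
    (hγ : Tendsto (fun j : ℕ => γ j / (j : ℝ) ^ a) atTop (𝓝 c)) :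
    Tendsto (fun s : ℕ => (∑ j ∈ Ico 1 s, γ j * (j : ℝ) ^ q) / (s : ℝ) ^ (a + q + 1)) atTop
      (𝓝 (c / (a + q + 1))) := by
  refine tendsto_sum_Ico_div_rpow haq (hγ.congr' ?_)
  filter_upwards [eventually_ge_atTop 1] with j hj
  have hj : (0 : ℝ) < j := by exact_mod_cast hj
  rw [Real.rpow_add hj, mul_div_mul_right _ _ (Real.rpow_pos_of_pos hj q).ne']

theorem isBigO_sum_Ico_abs_rpow {a c : ℝ} (ha : -1 < a) {γ : ℕ → ℝ}
    (hγ : Tendsto (fun j : ℕ => γ j / (j : ℝ) ^ a) atTop (𝓝 c)) :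
    (fun s => ∑ j ∈ Ico 1 s, |γ j|) =O[atTop] fun s : ℕ => (s : ℝ) ^ (a + 1) := by
  refine isBigO_of_div_tendsto_nhds ?_ _ (tendsto_sum_Ico_div_rpow ha (hγ.abs.congr' ?_))
  · filter_upwards [eventually_ge_atTop 1] with s hs h
    exact absurd h (Real.rpow_pos_of_pos (by exact_mod_cast hs) _).ne'
  · filter_upwards [eventually_ge_atTop 1] with j hj
    rw [abs_div, abs_of_pos (Real.rpow_pos_of_pos (by exact_mod_cast hj) a)]

theorem isLittleO_natCast_rpow_rpow {p r : ℝ} (hpr : p < r) :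
    (fun s : ℕ => (s : ℝ) ^ p) =o[atTop] fun s : ℕ => (s : ℝ) ^ r := by
  rw [isLittleO_iff_tendsto']
  · refine ((tendsto_rpow_neg_atTop (sub_pos.2 hpr)).comp tendsto_natCast_atTop_atTop).congr' ?_
    filter_upwards [eventually_ge_atTop 1] with s hs
    have hs : (0 : ℝ) < s := by exact_mod_cast hs
    rw [Function.comp_apply, ← Real.rpow_sub hs, neg_sub]
  · filter_upwards [eventually_ge_atTop 1] with s hs h
    exact absurd h (Real.rpow_pos_of_pos (by exact_mod_cast hs) r).ne'

theorem isLittleO_sum_Ico_mul_of_abs_le {a : ℕ → ℝ} {e : ℕ → ℕ → ℝ} {u v : ℕ → ℝ}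
    (hu : ∀ s, 0 ≤ u s)
    (ha : (fun s => ∑ j ∈ Ico 1 s, |a j|) =O[atTop] v)
    (he : ∀ ε > (0 : ℝ), ∃ N, ∀ s ≥ N, ∀ j, 1 ≤ j → j ≤ s - 1 → |e s j| ≤ ε * u s) :
    (fun s => ∑ j ∈ Ico 1 s, a j * e s j) =o[atTop] fun s => u s * v s := by
  refine isLittleO_iff.2 fun c hc => ?_
  obtain ⟨C, hC, hCv⟩ := ha.exists_pos
  obtain ⟨N, hN⟩ := he (c / C) (div_pos hc hC)
  filter_upwards [hCv.bound, eventually_ge_atTop N] with s hsum hs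
  rw [Real.norm_of_nonneg (sum_nonneg fun j _ => abs_nonneg (a j))] at hsum
  calc ‖∑ j ∈ Ico 1 s, a j * e s j‖
      ≤ ∑ j ∈ Ico 1 s, |a j| * (c / C * u s) := by
        refine (abs_sum_le_sum_abs _ _).trans (sum_le_sum fun j hj => ?_)
        have hj := mem_Ico.1 hj
        rw [abs_mul]
        exact mul_le_mul_of_nonneg_left (hN s hs j hj.1 (by omega)) (abs_nonneg _)
    _ = c / C * u s * ∑ j ∈ Ico 1 s, |a j| := by rw [← sum_mul, mul_comm]
    _ ≤ c / C * u s * (C * ‖v s‖) := by have := hu s; gcongr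
    _ = c * ‖u s * v s‖ := by
        rw [norm_mul, Real.norm_of_nonneg (hu s)]
        field_simp

theorem sum_mul_sum_rpow_div_rpow {x : ℝ} (hx : 0 < x) (a d : ℕ → ℝ) (J Q : Finset ℕ)
    (r : ℝ) :
    (∑ j ∈ J, a j * ∑ q ∈ Q, d q * x ^ ((2 : ℝ) - q) * (j : ℝ) ^ (q : ℝ)) / x ^ r
      = ∑ q ∈ Q, d q * ((∑ j ∈ J, a j * (j : ℝ) ^ (q : ℝ)) / x ^ (r - 2 + q)) := by
  simp only [mul_sum, sum_div]
  rw [sum_comm]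
  refine sum_congr rfl fun q _ => sum_congr rfl fun j _ => ?_
  rw [show r - 2 + q = r - (2 - q) by ring, Real.rpow_sub hx r, div_div_eq_mul_div]
  ring

theorem tendsto_sum_Ico_mul_sum_rpow_div_rpow {a c : ℝ} (ha : -1 < a) {γ : ℕ → ℝ}
    (hγ : Tendsto (fun j : ℕ => γ j / (j : ℝ) ^ a) atTop (𝓝 c)) (d : ℕ → ℝ) (Q : Finset ℕ) :
    Tendsto (fun s : ℕ => (∑ j ∈ Ico 1 s,
        γ j * ∑ q ∈ Q, d q * (s : ℝ) ^ ((2 : ℝ) - q) * (j : ℝ) ^ (q : ℝ)) / (s : ℝ) ^ (a + 3))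
      atTop (𝓝 (c * ∑ q ∈ Q, d q / (a + q + 1))) := by
  have hterm (q : ℕ) := (tendsto_sum_Ico_mul_rpow_div_rpow (q := q)
    (by linarith [q.cast_nonneg (α := ℝ)]) hγ).const_mul (d q)
  rw [mul_sum, sum_congr rfl fun q _ => mul_div_left_comm c (d q) _]
  refine (tendsto_finsetSum Q fun q _ => hterm q).congr' ?_
  filter_upwards [eventually_ge_atTop 1] with s hs
  rw [sum_mul_sum_rpow_div_rpow (by exact_mod_cast hs)]
  simp only [show a + 3 - 2 = a + 1 by ring, add_right_comm a 1]

def superdiagSum {R : Type*} [AddCommMonoid R] {s : ℕ} (A : Matrix (Fin s) (Fin s) R) (j : ℕ) :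
    R :=
  ∑ k : Fin s, ∑ l : Fin s, if (l : ℕ) = k + j then A k l else 0

theorem sum_Ico_mul_superdiagSum {R : Type*} [CommSemiring R] {s : ℕ}
    (A : Matrix (Fin s) (Fin s) R) (f : ℕ → R) (lo : ℕ) :
    ∑ j ∈ Ico lo s, f j * superdiagSum A j
      = ∑ k : Fin s, ∑ l : Fin s, if (k : ℕ) + lo ≤ l then A k l * f (Nat.dist k l) else 0 := by
  simp only [superdiagSum, mul_sum]
  rw [sum_comm]
  refine sum_congr rfl fun k _ => ?_
  rw [sum_comm]
  refine sum_congr rfl fun l _ => ?_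
  have := l.isLt
  split_ifs with h
  · rw [sum_eq_single_of_mem ((l : ℕ) - k) (mem_Ico.2 ⟨by omega, by omega⟩)]
    · rw [if_pos (by omega), mul_comm, Nat.dist_eq_sub_of_le (by omega)]
    · intro j _ hj
      rw [if_neg (by omega), mul_zero]
  · exact sum_eq_zero fun j hj => by rw [if_neg (by rw [mem_Ico] at hj; omega), mul_zero]

theorem sum_mul_dist_eq_of_isSymm {R : Type*} [CommSemiring R] {s : ℕ}
    {A : Matrix (Fin s) (Fin s) R} (hA : A.IsSymm) (f : ℕ → R) :
    ∑ k : Fin s, ∑ l : Fin s, A k l * f (Nat.dist k l)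
      = f 0 * superdiagSum A 0 + 2 * ∑ j ∈ Ico 1 s, f j * superdiagSum A j := by
  rcases Nat.eq_zero_or_pos s with rfl | hs
  · simp [superdiagSum]
  have hlower :
      (∑ k : Fin s, ∑ l : Fin s, if (l : ℕ) + 1 ≤ k then A k l * f (Nat.dist k l) else 0)
        = ∑ k : Fin s, ∑ l : Fin s, if (k : ℕ) + 1 ≤ l then A k l * f (Nat.dist k l) else 0 := by
    rw [sum_comm]
    simp only [hA.apply, Nat.dist_comm]
  rw [two_mul, ← add_assoc, ← sum_range_eq_add_Ico (fun j => f j * superdiagSum A j) hs,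
    range_eq_Ico, sum_Ico_mul_superdiagSum, sum_Ico_mul_superdiagSum, ← hlower,
    ← sum_add_distrib]
  refine sum_congr rfl fun k _ => ?_
  rw [← sum_add_distrib]
  refine sum_congr rfl fun l _ => ?_
  split_ifs <;> first | omega | simp

theorem dfaQ_isSymm (m s : ℕ) : (dfaQ m s).IsSymm := by
  rw [Matrix.IsSymm, dfaQ, transpose_mul, transpose_mul, transpose_transpose,
    transpose_nonsing_inv, transpose_mul, transpose_transpose, Matrix.mul_assoc]

theorem dfaA_isSymm (m s : ℕ) : (dfaA m s).IsSymm := by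
  rw [Matrix.IsSymm, dfaA, transpose_mul, transpose_mul, transpose_transpose, transpose_sub,
    transpose_one, (dfaQ_isSymm m s).eq, Matrix.mul_assoc]

section Stationary

variable {Ω : Type*} [MeasurableSpace Ω] {μ : Measure Ω} {X : ℕ → Ω → ℝ} {γ : ℕ → ℝ}

theorem integral_mul_eq_dist (hcov : ∀ t τ, ∫ ω, X t ω * X (t + τ) ω ∂μ = γ τ) (t u : ℕ) :
    ∫ ω, X t ω * X u ω ∂μ = γ (Nat.dist t u) := by
  rcases le_total t u with h | h
  · rw [Nat.dist_eq_sub_of_le h, ← hcov, Nat.add_sub_cancel' h]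
  · simp_rw [mul_comm (X t _)]
    rw [Nat.dist_eq_sub_of_le_right h, ← hcov, Nat.add_sub_cancel' h]

theorem integral_sum_mul_mul_eq_sum_mul_dist {s : ℕ} (A : Matrix (Fin s) (Fin s) ℝ) (t₀ : ℕ)
    (hint : ∀ t u, Integrable (fun ω => X t ω * X u ω) μ)
    (hcov : ∀ t τ, ∫ ω, X t ω * X (t + τ) ω ∂μ = γ τ) :
    ∫ ω, ∑ k : Fin s, ∑ l : Fin s, A k l * X (t₀ + k) ω * X (t₀ + l) ω ∂μ
      = ∑ k : Fin s, ∑ l : Fin s, A k l * γ (Nat.dist k l) := by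
  simp_rw [mul_assoc]
  refine (integral_finsetSum _ fun k _ =>
    integrable_finsetSum _ fun l _ => (hint _ _).const_mul _).trans (sum_congr rfl fun k _ => ?_)
  refine (integral_finsetSum _ fun l _ => (hint _ _).const_mul _).trans
    (sum_congr rfl fun l _ => ?_)
  rw [integral_const_mul, integral_mul_eq_dist hcov, Nat.dist_add_add_left]

theorem integral_dfa_fluctuation_eq (hint : ∀ t u, Integrable (fun ω => X t ω * X u ω) μ)
    (hcov : ∀ t τ, ∫ ω, X t ω * X (t + τ) ω ∂μ = γ τ) (m s : ℕ) :
    ∫ ω, (1 / (s : ℝ)) * ∑ k : Fin s, ∑ j : Fin s,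
        dfaA m s k j * X (1 + (k : ℕ)) ω * X (1 + (j : ℕ)) ω ∂μ
      = (1 / s) * (γ 0 * dfaG m s 0 + 2 * ∑ j ∈ Ico 1 s, γ j * dfaG m s j) := by
  rw [integral_const_mul, integral_sum_mul_mul_eq_sum_mul_dist _ 1 hint hcov,
    sum_mul_dist_eq_of_isSymm (dfaA_isSymm m s)]
  rfl

end Stationary

theorem dfa_scaling_persistent_general {Ω : Type*} [MeasurableSpace Ω] (μ : Measure Ω)
    (m : ℕ) (X : ℕ → Ω → ℝ) (H : ℝ) (γ : ℕ → ℝ)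
    (hH1 : 1/2 < H)
    (hint : ∀ t u, Integrable (fun ω => X t ω * X u ω) μ)
    (hcov : ∀ t τ, ∫ ω, X t ω * X (t + τ) ω ∂μ = γ τ)
    (hγasym : Tendsto (fun τ : ℕ => γ τ / (H * (2*H - 1) * (τ:ℝ) ^ (2*H - 2)))
      atTop (nhds 1))
    (d : ℕ → ℝ)
    (hG0 : Tendsto (fun s : ℕ => dfaG m s 0 / (d 0 * (s:ℝ)^2)) atTop (nhds 1))
    (hG : ∀ ε > (0:ℝ), ∃ N, ∀ s ≥ N, ∀ j, 1 ≤ j → j ≤ s - 1 →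
      |dfaG m s j - ∑ q ∈ Finset.range (2*m + 4),
          d q * (s:ℝ) ^ ((2:ℝ) - q) * (j:ℝ) ^ (q:ℝ)| ≤ ε * (s:ℝ)^2) :
    Tendsto (fun s : ℕ =>
        (∫ ω, (1/(s:ℝ)) * ∑ k : Fin s, ∑ j : Fin s,
            dfaA m s k j * X (1 + (k:ℕ)) ω * X (1 + (j:ℕ)) ω ∂μ) / (s:ℝ) ^ (2*H))
      atTop
      (nhds (2 * H * (2*H - 1) * ∑ q ∈ Finset.range (2*m + 4),
        d q / ((q:ℝ) + 2*H - 1))) := by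
  set P : ℕ → ℕ → ℝ := fun s j =>
    ∑ q ∈ range (2 * m + 4), d q * (s : ℝ) ^ ((2 : ℝ) - q) * (j : ℝ) ^ (q : ℝ)
  have hγ : Tendsto (fun j : ℕ => γ j / (j : ℝ) ^ (2 * H - 2)) atTop (𝓝 (H * (2 * H - 1))) :=
    tendsto_div_of_tendsto_div_const_mul (mul_pos (by linarith) (by linarith)).ne' hγasym
  have hdiag : (fun s : ℕ => γ 0 * dfaG m s 0) =o[atTop] fun s : ℕ => (s : ℝ) ^ (2 * H + 1) := by
    refine (isBigO_of_tendsto_div_const_mul hG0).const_mul_left _ |>.trans_isLittleO ?_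
    simpa only [Real.rpow_two] using isLittleO_natCast_rpow_rpow (p := 2) (by linarith)
  have herr : (fun s => ∑ j ∈ Ico 1 s, γ j * (dfaG m s j - P s j))
      =o[atTop] fun s : ℕ => (s : ℝ) ^ (2 * H + 1) := by
    refine (isLittleO_sum_Ico_mul_of_abs_le (u := fun s : ℕ => (s : ℝ) ^ 2)
      (fun s => by positivity) (isBigO_sum_Ico_abs_rpow (by linarith) hγ) hG).congr'
        EventuallyEq.rfl ?_
    filter_upwards [eventually_ge_atTop 1] with s hs
    rw [← Real.rpow_two, ← Real.rpow_add (by exact_mod_cast hs)]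
    congr 1
    ring
  have hmain := tendsto_sum_Ico_mul_sum_rpow_div_rpow (a := 2 * H - 2) (by linarith) hγ d
    (range (2 * m + 4))
  rw [show 2 * H - 2 + 3 = 2 * H + 1 by ring] at hmain
  have hlim := ((hdiag.add (herr.const_mul_left 2)).tendsto_div_nhds_zero).add
    (hmain.const_mul 2)
  simp only [show ∀ q : ℝ, 2 * H - 2 + q + 1 = q + 2 * H - 1 from fun q => by ring, zero_add,
    ← mul_assoc] at hlim
  refine hlim.congr' ?_
  filter_upwards [eventually_ge_atTop 1] with s hs
  have hs : (s : ℝ) ≠ 0 := by positivity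
  simp only [integral_dfa_fluctuation_eq hint hcov, P, mul_sub, sum_sub_distrib,
    Real.rpow_add_one hs]
  field_simp
  ring

theorem dfa_scaling_persistent {Ω : Type*} [MeasurableSpace Ω] (μ : Measure Ω)
    [IsProbabilityMeasure μ] (m : ℕ) (X : ℕ → Ω → ℝ) (H : ℝ) (γ : ℕ → ℝ)
    (hH1 : 1/2 < H) (hH2 : H < 1)
    (hmean : ∀ t, ∫ ω, X t ω ∂μ = 0)
    (hint : ∀ t u, Integrable (fun ω => X t ω * X u ω) μ)
    (hcov : ∀ t τ, ∫ ω, X t ω * X (t + τ) ω ∂μ = γ τ)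
    (hγ0 : γ 0 = 1)
    (hγasym : Tendsto (fun τ : ℕ => γ τ / (H * (2*H - 1) * (τ:ℝ) ^ (2*H - 2)))
      atTop (nhds 1))
    (d : ℕ → ℝ)
    (hG0 : Tendsto (fun s : ℕ => dfaG m s 0 / (d 0 * (s:ℝ)^2)) atTop (nhds 1))
    (hG : ∀ ε > (0:ℝ), ∃ N, ∀ s ≥ N, ∀ j, 1 ≤ j → j ≤ s - 1 →
      |dfaG m s j - ∑ q ∈ Finset.range (2*m + 4),
          d q * (s:ℝ) ^ ((2:ℝ) - q) * (j:ℝ) ^ (q:ℝ)| ≤ ε * (s:ℝ)^2) :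
    Tendsto (fun s : ℕ =>
        (∫ ω, (1/(s:ℝ)) * ∑ k : Fin s, ∑ j : Fin s,
            dfaA m s k j * X (1 + (k:ℕ)) ω * X (1 + (j:ℕ)) ω ∂μ) / (s:ℝ) ^ (2*H))
      atTop
      (nhds (2 * H * (2*H - 1) * ∑ q ∈ Finset.range (2*m + 4),
        d q / ((q:ℝ) + 2*H - 1))) :=
  dfa_scaling_persistent_general μ m X H γ hH1 hint hcov hγasym d hG0 hG
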